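/- arXiv:1610.02704 — 3 statements merged into one kernel-verified Lean document; each statement's English description precedes it below -/
import Mathlib

section
/- Let f : {-1,1}^n → ℝ≥0, η > 0, and suppose deg(f) ≤ D < deg₊(f + η), where deg(f) is the Fourier degree of f. Then there exists a function L : {-1,1}^n → ℝ of degree at most D such that: (1) E[L] = 1; (2) E[L·f] < −η; (3) E[L·h] ≥ 0 for every conical D-junta h on {-1,1}^n; (4) |L̂(S)| ≤ 1 for every S ⊆ [n] with |S| ≤ D; (5) ‖L‖∞ ≤ n^D. -/
/-!
If `f + η` is not a conical `D`-junta, Farkas' lemma, applied to the finitely many indicators of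
subcubes of codimension at most `D` (which generate all conical `D`-juntas), yields a function `Y`
pairing nonnegatively with every conical `D`-junta and negatively with `f + η`. An affine change
`α Y + β` with `α, β ≥ 0` normalises it to `E[L] = 1` and `E[L f] < -η`, and truncating its
Fourier expansion at degree `D` changes none of these pairings, because `f` and all conical
`D`-juntas have degree at most `D`. Testing against the conical juntas `1 ± χ_S` bounds every
coefficient by `1`, hence `‖L‖∞` by the number of sets of size at most `D`, which is at most `n^D`
once `2 ≤ D < n`. The case `D ≤ 1` cannot occur: a nonnegative function of degree at most `1`,
`a₀ + ∑ aᵢ xᵢ`, is `min f + ∑ (|aᵢ| + aᵢ xᵢ)`, a conical junta of that degree.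
-/

open scoped BigOperators

noncomputable section

/-- Sign of a Boolean bit, encoding `b ↦ (-1)^b ∈ {-1,1}`. -/
def sgn (x : Bool) : ℝ := if x then -1 else 1

/-- Expectation under the uniform distribution on a finite type. -/
def uexp {Ω : Type*} [Fintype Ω] (f : Ω → ℝ) : ℝ :=
  (∑ x, f x) / (Fintype.card Ω : ℝ)

/-- The parity character `χ_S(x) = ∏_{i ∈ S} x_i` on the cube `{-1,1}^n`. -/
def chi {n : ℕ} (S : Finset (Fin n)) (x : Fin n → Bool) : ℝ :=
  ∏ i ∈ S, sgn (x i)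

/-- Fourier coefficient `f̂(S) = E[f · χ_S]`. -/
def fCoeff {n : ℕ} (f : (Fin n → Bool) → ℝ) (S : Finset (Fin n)) : ℝ :=
  uexp (fun x => f x * chi S x)

open Classical in
/-- Fourier degree: the largest `|S|` with `f̂(S) ≠ 0`. -/
def fdeg {n : ℕ} (f : (Fin n → Bool) → ℝ) : ℕ :=
  (Finset.univ.filter (fun S : Finset (Fin n) => fCoeff f S ≠ 0)).sup Finset.card

/-- A `d`-junta: a function depending on at most `d` coordinates. -/
def IsJunta {n : ℕ} (d : ℕ) (h : (Fin n → Bool) → ℝ) : Prop :=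
  ∃ T : Finset (Fin n), T.card ≤ d ∧ ∀ x y, (∀ i ∈ T, x i = y i) → h x = h y

/-- A conical `d`-junta: a nonnegative combination of nonnegative `d`-juntas. -/
def IsConicalJunta {n : ℕ} (d : ℕ) (f : (Fin n → Bool) → ℝ) : Prop :=
  ∃ (N : ℕ) (c : Fin N → ℝ) (g : Fin N → (Fin n → Bool) → ℝ),
    (∀ i, 0 ≤ c i) ∧ (∀ i x, 0 ≤ g i x) ∧ (∀ i, IsJunta d (g i)) ∧
    ∀ x, f x = ∑ i, c i * g i x

/-- Nonnegative degree `deg₊(f)`: least `d` such that `f` is a conical `d`-junta. -/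
def degPlus {n : ℕ} (f : (Fin n → Bool) → ℝ) : ℕ :=
  sInf {d | IsConicalJunta d f}

/-- The (modified inner-product) gadget `g : {0,1}^b × {0,1}^b → {-1,1}`,
with output encoded as a Boolean exponent: `g(x,y) = x₁ ⊕ y₁ ⊕ (⊕ᵢ xᵢyᵢ)`. -/
def gadget {b : ℕ} (x y : Fin b → Bool) : Bool :=
  decide (((∑ i : Fin b,
        (if x i then (1 : ZMod 2) else 0) * (if y i then (1 : ZMod 2) else 0))
    + (if h : 0 < b then
        (if x ⟨0, h⟩ then (1 : ZMod 2) else 0) + (if y ⟨0, h⟩ then (1 : ZMod 2) else 0)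
      else 0)) = 1)

/-- `G = g^{⊗n}`, the gadget applied coordinatewise. -/
def gadgetN {n b : ℕ} (x y : Fin n → Fin b → Bool) : Fin n → Bool :=
  fun i => gadget (x i) (y i)

/-- The pattern matrix `M_f^b(x,y) = f(g^{⊗n}(x,y))`. -/
def patternMatrix {n : ℕ} (b : ℕ) (f : (Fin n → Bool) → ℝ) :
    (Fin n → Fin b → Bool) → (Fin n → Fin b → Bool) → ℝ :=
  fun x y => f (gadgetN x y)

/-- Nonnegative rank: least `r` such that `M` is a sum of `r` nonnegative rank-1 matrices. -/
def nnRank {α β : Type*} [Fintype α] [Fintype β] (M : α → β → ℝ) : ℕ :=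
  sInf {r | ∃ (u : Fin r → α → ℝ) (v : Fin r → β → ℝ),
    (∀ i a, 0 ≤ u i a) ∧ (∀ i b, 0 ≤ v i b) ∧ ∀ a b, M a b = ∑ i, u i a * v i b}

/-- Entrywise sup-norm of a matrix. -/
def supAbs {α β : Type*} [Fintype α] [Fintype β] (M : α → β → ℝ) : ℝ :=
  ⨆ p : α × β, |M p.1 p.2|

/-- `ε`-approximate nonnegative rank. -/
def approxNNRank {α β : Type*} [Fintype α] [Fintype β] (ε : ℝ) (M : α → β → ℝ) : ℕ :=
  sInf {r | ∃ M' : α → β → ℝ, (∀ a b, 0 ≤ M' a b) ∧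
    (∀ a b, |M' a b - M a b| ≤ ε * supAbs M) ∧ nnRank M' ≤ r}

/-- A density: nonnegative with expectation 1 under the uniform distribution. -/
def IsDensity {Ω : Type*} [Fintype Ω] (u : Ω → ℝ) : Prop :=
  (∀ x, 0 ≤ u x) ∧ uexp u = 1

/-- `Pr_{X ~ μ}[X ∈ S]` for a density `μ`. -/
def prSet {Ω : Type*} [Fintype Ω] (μ : Ω → ℝ) (S : Finset Ω) : ℝ :=
  (∑ x ∈ S, μ x) / (Fintype.card Ω : ℝ)

/-- Min-entropy `H∞(u) = min_x log₂(|Ω| / u(x)) = -log₂ max_x Pr[X = x]`. -/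
def minEntropy {Ω : Type*} [Fintype Ω] (u : Ω → ℝ) : ℝ :=
  - Real.logb 2 (⨆ x, u x / (Fintype.card Ω : ℝ))

open Classical in
/-- `Pr_{X ~ u}[X_I = y_I]`, the probability that the projection to `I` agrees with `y`. -/
def prMarg {n : ℕ} {α : Type*} [Fintype α] (u : (Fin n → α) → ℝ) (I : Finset (Fin n))
    (y : Fin n → α) : ℝ :=
  (∑ x ∈ Finset.univ.filter (fun x : Fin n → α => ∀ i ∈ I, x i = y i), u x)
    / (Fintype.card (Fin n → α) : ℝ)

/-- Min-entropy of the projection `X_I` for `X ~ u`. -/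
def projMinEntropy {n : ℕ} {α : Type*} [Fintype α] (u : (Fin n → α) → ℝ)
    (I : Finset (Fin n)) : ℝ :=
  - Real.logb 2 (⨆ y : Fin n → α, prMarg u I y)

/-- Blockwise-dense: every projection has min-entropy at least `0.8 |I| log₂ q`. -/
def IsBlockwiseDense {n : ℕ} {α : Type*} [Fintype α] (u : (Fin n → α) → ℝ) : Prop :=
  ∀ I : Finset (Fin n),
    0.8 * (I.card : ℝ) * Real.logb 2 (Fintype.card α) ≤ projMinEntropy u I

/-- `d`-CBD with fixed set `I`: `X_I` is fixed and every disjoint projection is dense. -/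
def IsCBDWith {n : ℕ} {α : Type*} [Fintype α] (d : ℝ) (I : Finset (Fin n))
    (u : (Fin n → α) → ℝ) : Prop :=
  (I.card : ℝ) ≤ d ∧ projMinEntropy u I = 0 ∧
  ∀ J : Finset (Fin n), Disjoint J I →
    0.8 * (J.card : ℝ) * Real.logb 2 (Fintype.card α) ≤ projMinEntropy u J

/-- `d`-CBD distribution. -/
def IsCBD {n : ℕ} {α : Type*} [Fintype α] (d : ℝ) (u : (Fin n → α) → ℝ) : Prop :=
  ∃ I, IsCBDWith d I u

open Classical in
/-- `Acc_{u,v}`: the density on `{-1,1}^n` of `g^{⊗n}(X,Y)` for independent `X ~ u`, `Y ~ v`. -/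
def AccFn {n b : ℕ} (u v : (Fin n → Fin b → Bool) → ℝ) (z : Fin n → Bool) : ℝ :=
  (2 : ℝ) ^ n * (∑ x : Fin n → Fin b → Bool, ∑ y : Fin n → Fin b → Bool,
      if gadgetN x y = z then u x * v y else 0)
    / (Fintype.card (Fin n → Fin b → Bool) : ℝ) ^ 2

/-- `ε`-decaying function: mean zero with `|ĥ(S)| ≤ ε^{|S|}`. -/
def IsDecaying {n : ℕ} (ε : ℝ) (h : (Fin n → Bool) → ℝ) : Prop :=
  uexp h = 0 ∧ ∀ S : Finset (Fin n), |fCoeff h S| ≤ ε ^ S.card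

/-- A `d`-conjunction, normalized to have expectation 1. -/
def IsConjunction {n : ℕ} (d : ℕ) (C : (Fin n → Bool) → ℝ) : Prop :=
  ∃ (I : Finset (Fin n)) (a : Fin n → Bool), I.card ≤ d ∧
    ∀ x, C x = 2 ^ I.card * (if ∀ i ∈ I, x i = a i then (1 : ℝ) else 0)

/-- `(ε,δ)`-approximate conical `d`-junta. -/
def IsApproxConicalJunta {n : ℕ} (ε δ : ℝ) (d : ℕ) (f : (Fin n → Bool) → ℝ) : Prop :=
  ∃ (N : ℕ) (lam : Fin N → ℝ) (C h : Fin N → (Fin n → Bool) → ℝ)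
    (γ : (Fin n → Bool) → ℝ),
    (∀ i, 0 ≤ lam i) ∧ (∑ i, lam i) ≤ 1 ∧
    (∀ i, IsConjunction d (C i)) ∧ (∀ i, IsDecaying ε (h i)) ∧
    (∀ x, 0 ≤ γ x) ∧ uexp γ ≤ δ ∧
    ∀ x, f x = (∑ i, lam i * C i x * (1 + h i x)) + γ x

open Classical in
/-- The density `μ` conditioned on the event `S`. -/
def condDensity {Ω : Type*} [Fintype Ω] (μ : Ω → ℝ) (S : Finset Ω) : Ω → ℝ :=
  fun x => if x ∈ S then μ x / prSet μ S else 0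

/-- First marginal density of a density on a product. -/
def margFst {Ω : Type*} [Fintype Ω] (μ : Ω × Ω → ℝ) : Ω → ℝ :=
  fun x => (∑ y, μ (x, y)) / (Fintype.card Ω : ℝ)

/-- Second marginal density of a density on a product. -/
def margSnd {Ω : Type*} [Fintype Ω] (μ : Ω × Ω → ℝ) : Ω → ℝ :=
  fun y => (∑ x, μ (x, y)) / (Fintype.card Ω : ℝ)

open Classical in
/-- `Pr_{(X,Y) ~ μ}[X_I = y.1_I ∧ Y_I = y.2_I]`. -/
def prMarg2 {n : ℕ} {α : Type*} [Fintype α]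
    (μ : (Fin n → α) × (Fin n → α) → ℝ) (I : Finset (Fin n))
    (y : (Fin n → α) × (Fin n → α)) : ℝ :=
  (∑ x ∈ Finset.univ.filter
      (fun x : (Fin n → α) × (Fin n → α) =>
        (∀ i ∈ I, x.1 i = y.1 i) ∧ (∀ i ∈ I, x.2 i = y.2 i)), μ x)
    / (Fintype.card ((Fin n → α) × (Fin n → α)) : ℝ)

/-- Min-entropy of the projection `μ_I` of a density on a product, projecting both factors. -/
def projMinEntropy2 {n : ℕ} {α : Type*} [Fintype α]
    (μ : (Fin n → α) × (Fin n → α) → ℝ) (I : Finset (Fin n)) : ℝ :=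
  - Real.logb 2 (⨆ y : (Fin n → α) × (Fin n → α), prMarg2 μ I y)

open Finset

section Expectation

variable {Ω : Type*} [Fintype Ω]

lemma uexp_add (f g : Ω → ℝ) : uexp (fun x => f x + g x) = uexp f + uexp g := by
  simp only [uexp, sum_add_distrib, add_div]

lemma uexp_const_mul (c : ℝ) (f : Ω → ℝ) : uexp (fun x => c * f x) = c * uexp f := by
  simp only [uexp, ← mul_sum, mul_div_assoc]

lemma uexp_sum {ι : Type*} (s : Finset ι) (F : ι → Ω → ℝ) :
    uexp (fun x => ∑ i ∈ s, F i x) = ∑ i ∈ s, uexp (F i) := by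
  simp only [uexp, ← sum_div]
  rw [sum_comm]

lemma uexp_nonneg {f : Ω → ℝ} (hf : ∀ x, 0 ≤ f x) : 0 ≤ uexp f :=
  div_nonneg (sum_nonneg fun x _ => hf x) (Nat.cast_nonneg _)

lemma uexp_const [Nonempty Ω] (c : ℝ) : uexp (fun _ : Ω => c) = c := by
  simp [uexp]

lemma uexp_mul_eq_dotProduct_div (y g : Ω → ℝ) :
    uexp (fun x => y x * g x) = y ⬝ᵥ g / Fintype.card Ω := rfl

end Expectation

section Fourier

variable {n : ℕ}

lemma sgn_mul_self (b : Bool) : sgn b * sgn b = 1 := by cases b <;> simp [sgn]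

lemma sgn_not (b : Bool) : sgn (!b) = -sgn b := by cases b <;> simp [sgn]

lemma abs_chi (S : Finset (Fin n)) (x : Fin n → Bool) : |chi S x| = 1 := by
  rw [chi, abs_prod]
  exact prod_eq_one fun i _ => by cases x i <;> simp [sgn]

lemma chi_mul_self (S : Finset (Fin n)) (x : Fin n → Bool) : chi S x * chi S x = 1 := by
  rw [chi, ← prod_mul_distrib]
  exact prod_eq_one fun i _ => sgn_mul_self (x i)

@[simp] lemma chi_empty (x : Fin n → Bool) : chi ∅ x = 1 := prod_empty

def flipAt (i : Fin n) : Equiv.Perm (Fin n → Bool) :=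
  Function.Involutive.toPerm (fun x => Function.update x i (!x i)) fun x => by
    ext j; by_cases h : j = i <;> simp [h]

lemma flipAt_apply (i : Fin n) (x : Fin n → Bool) : flipAt i x = Function.update x i (!x i) :=
  rfl

lemma flipAt_apply_of_ne {i j : Fin n} (h : j ≠ i) (x : Fin n → Bool) : flipAt i x j = x j := by
  simp [flipAt_apply, h]

lemma chi_flipAt_of_mem {S : Finset (Fin n)} {i : Fin n} (hi : i ∈ S) (x : Fin n → Bool) :
    chi S (flipAt i x) = -chi S x := by
  rw [chi, chi, ← mul_prod_erase _ _ hi, ← mul_prod_erase _ _ hi,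
    prod_congr rfl fun j hj => by rw [flipAt_apply_of_ne (ne_of_mem_erase hj)]]
  simp [flipAt_apply, sgn_not]

lemma chi_flipAt_of_notMem {S : Finset (Fin n)} {i : Fin n} (hi : i ∉ S) (x : Fin n → Bool) :
    chi S (flipAt i x) = chi S x :=
  prod_congr rfl fun j hj => by rw [flipAt_apply_of_ne (ne_of_mem_of_not_mem hj hi)]

lemma sum_eq_zero_of_flipAt {g : (Fin n → Bool) → ℝ} (i : Fin n)
    (hg : ∀ x, g (flipAt i x) = -g x) : ∑ x, g x = 0 := by
  have h := Equiv.sum_comp (flipAt i) g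
  simp only [hg, sum_neg_distrib] at h
  linarith

lemma fCoeff_eq_zero_of_not_subset {h : (Fin n → Bool) → ℝ} {T S : Finset (Fin n)}
    (hT : ∀ x y, (∀ i ∈ T, x i = y i) → h x = h y) (hS : ¬S ⊆ T) : fCoeff h S = 0 := by
  obtain ⟨i, hiS, hiT⟩ := not_subset.mp hS
  have hflip : ∀ x, h (flipAt i x) = h x := fun x =>
    hT _ _ fun j hj => flipAt_apply_of_ne (ne_of_mem_of_not_mem hj hiT) x
  rw [fCoeff, uexp, sum_eq_zero_of_flipAt i fun x => by
    rw [hflip, chi_flipAt_of_mem hiS, mul_neg], zero_div]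

lemma IsJunta.fCoeff_eq_zero {D : ℕ} {h : (Fin n → Bool) → ℝ} (hh : IsJunta D h)
    {S : Finset (Fin n)} (hS : D < S.card) : fCoeff h S = 0 := by
  obtain ⟨T, hTD, hT⟩ := hh
  exact fCoeff_eq_zero_of_not_subset hT fun hST => by linarith [card_le_card hST]

lemma uexp_chi_mul_chi (S T : Finset (Fin n)) :
    uexp (fun x => chi S x * chi T x) = if S = T then 1 else 0 := by
  split_ifs with h
  · simp [h, chi_mul_self, uexp_const]
  · suffices ∀ S T : Finset (Fin n), ¬S ⊆ T → ∑ x, chi S x * chi T x = 0 by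
      rw [uexp]
      by_cases hST : S ⊆ T
      · simp_rw [mul_comm (chi S _)]
        rw [this T S fun hTS => h (subset_antisymm hST hTS), zero_div]
      · rw [this S T hST, zero_div]
    intro S T hST
    obtain ⟨i, hiS, hiT⟩ := not_subset.mp hST
    exact sum_eq_zero_of_flipAt i fun x => by
      rw [chi_flipAt_of_mem hiS, chi_flipAt_of_notMem hiT, neg_mul]

lemma uexp_chi (S : Finset (Fin n)) : uexp (chi S) = if S = ∅ then 1 else 0 := by
  simpa using uexp_chi_mul_chi S ∅

lemma sum_chi_mul_chi (z x : Fin n → Bool) :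
    ∑ S : Finset (Fin n), chi S z * chi S x = if z = x then 2 ^ n else 0 := by
  have hprod : ∀ S : Finset (Fin n), chi S z * chi S x = ∏ i ∈ S, sgn (z i) * sgn (x i) :=
    fun S => (prod_mul_distrib).symm
  simp_rw [hprod, ← powerset_univ, ← prod_one_add]
  split_ifs with h
  · simp [h, sgn_mul_self, one_add_one_eq_two]
  · obtain ⟨i, hi⟩ := Function.ne_iff.mp h
    refine prod_eq_zero (mem_univ i) ?_
    cases hz : z i <;> cases hx : x i <;> simp_all [sgn]

lemma fCoeff_sum_mul_chi (A : Finset (Finset (Fin n))) (d : Finset (Fin n) → ℝ)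
    (T : Finset (Fin n)) :
    fCoeff (fun x => ∑ S ∈ A, d S * chi S x) T = if T ∈ A then d T else 0 := by
  simp_rw [fCoeff, sum_mul, mul_assoc, uexp_sum, uexp_const_mul, uexp_chi_mul_chi, mul_ite,
    mul_one, mul_zero, sum_ite_eq']

lemma sum_fCoeff_mul_chi (f : (Fin n → Bool) → ℝ) (x : Fin n → Bool) :
    ∑ S, fCoeff f S * chi S x = f x := by
  simp_rw [fCoeff, uexp, div_mul_eq_mul_div, ← sum_div, sum_mul]
  rw [sum_comm]
  simp_rw [mul_assoc, ← mul_sum, sum_chi_mul_chi, mul_ite, mul_zero, sum_ite_eq']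
  simp

lemma uexp_mul_eq_sum_fCoeff_mul (u h : (Fin n → Bool) → ℝ) :
    uexp (fun x => u x * h x) = ∑ S, fCoeff u S * fCoeff h S := by
  conv_lhs => enter [1, x, 2]; rw [← sum_fCoeff_mul_chi h x]
  simp_rw [mul_sum, uexp_sum, mul_left_comm (u _), uexp_const_mul, mul_comm (fCoeff h _)]
  rfl

lemma fdeg_le_iff {f : (Fin n → Bool) → ℝ} {D : ℕ} :
    fdeg f ≤ D ↔ ∀ S : Finset (Fin n), D < S.card → fCoeff f S = 0 := by
  classical
  simp only [fdeg, Finset.sup_le_iff, mem_filter, mem_univ, true_and]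
  exact forall_congr' fun S => by rw [← not_imp_not, not_le, not_not]

lemma fCoeff_add_const (f : (Fin n → Bool) → ℝ) (c : ℝ) {S : Finset (Fin n)} (hS : S ≠ ∅) :
    fCoeff (fun x => f x + c) S = fCoeff f S := by
  simp_rw [fCoeff, add_mul, uexp_add, uexp_const_mul]
  rw [uexp_chi, if_neg hS, mul_zero, add_zero]

lemma fdeg_add_const_le {f : (Fin n → Bool) → ℝ} {D : ℕ} (hf : fdeg f ≤ D) (c : ℝ) :
    fdeg (fun x => f x + c) ≤ D := by
  rw [fdeg_le_iff] at hf ⊢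
  intro S hS
  rw [fCoeff_add_const f c fun h => by simp [h] at hS, hf S hS]

end Fourier

section Junta

variable {n D : ℕ}

lemma IsConicalJunta.nonneg {h : (Fin n → Bool) → ℝ} (hh : IsConicalJunta D h)
    (x : Fin n → Bool) : 0 ≤ h x := by
  obtain ⟨N, c, g, hc, hg, -, hsum⟩ := hh
  rw [hsum]
  exact sum_nonneg fun i _ => mul_nonneg (hc i) (hg i x)

lemma IsConicalJunta.fdeg_le {h : (Fin n → Bool) → ℝ} (hh : IsConicalJunta D h) : fdeg h ≤ D := by
  obtain ⟨N, c, g, -, -, hj, hsum⟩ := hh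
  rw [fdeg_le_iff]
  intro S hS
  simp_rw [fCoeff, hsum, sum_mul, mul_assoc, uexp_sum, uexp_const_mul]
  exact sum_eq_zero fun i _ => by rw [← fCoeff, (hj i).fCoeff_eq_zero hS, mul_zero]

lemma isConicalJunta_sum {ι : Type*} [Fintype ι] (c : ι → ℝ) (g : ι → (Fin n → Bool) → ℝ)
    (hc : ∀ i, 0 ≤ c i) (hg : ∀ i x, 0 ≤ g i x) (hj : ∀ i, IsJunta D (g i)) :
    IsConicalJunta D (fun x => ∑ i, c i * g i x) := by
  let e := Fintype.equivFin ι
  exact ⟨_, c ∘ e.symm, g ∘ e.symm, fun _ => hc _, fun _ => hg _, fun _ => hj _,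
    fun x => (e.symm.sum_comp fun i => c i * g i x).symm⟩

lemma IsJunta.isConicalJunta {g : (Fin n → Bool) → ℝ} (hj : IsJunta D g) (hg : ∀ x, 0 ≤ g x) :
    IsConicalJunta D g :=
  ⟨1, fun _ => 1, fun _ => g, fun _ => zero_le_one, fun _ => hg, fun _ => hj, fun x => by simp⟩

lemma isJunta_const (c : ℝ) : IsJunta D (fun _ : Fin n → Bool => c) :=
  ⟨∅, by simp, fun _ _ _ => rfl⟩

lemma isConicalJunta_one : IsConicalJunta D (fun _ : Fin n → Bool => (1 : ℝ)) :=
  (isJunta_const 1).isConicalJunta fun _ => zero_le_one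

lemma isConicalJunta_of_nonneg {f : (Fin n → Bool) → ℝ} (hf : ∀ x, 0 ≤ f x) :
    IsConicalJunta n f :=
  IsJunta.isConicalJunta
    ⟨univ, by simp, fun x y hxy => congrArg f (funext fun i => hxy i (mem_univ i))⟩ hf

end Junta

section DegreeOne

variable {n D : ℕ}

lemma fCoeff_empty_add_sum_fCoeff_singleton_mul_sgn {f : (Fin n → Bool) → ℝ} (hf : fdeg f ≤ 1)
    (x : Fin n → Bool) : fCoeff f ∅ + ∑ i, fCoeff f {i} * sgn (x i) = f x := by
  classical
  have hempty : (∅ : Finset (Fin n)) ∉ univ.map ⟨singleton, singleton_injective⟩ := by simp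
  rw [← sum_fCoeff_mul_chi f x,
    ← sum_subset (subset_univ (insert ∅ (univ.map ⟨singleton, singleton_injective⟩))),
    sum_insert hempty, sum_map]
  · simp [chi]
  · intro S _ hS
    have hcard : 1 < S.card := by
      rcases S.eq_empty_or_nonempty with rfl | hne
      · simp at hS
      · rcases hne.exists_eq_singleton_or_nontrivial with ⟨i, rfl⟩ | hnt
        · simp at hS
        · exact one_lt_card_iff_nontrivial.mpr hnt
    rw [fdeg_le_iff.mp hf S hcard, zero_mul]

lemma isConicalJunta_of_fdeg_le_one {f : (Fin n → Bool) → ℝ} (hf : ∀ x, 0 ≤ f x)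
    (hdeg : fdeg f ≤ D) (hD : D ≤ 1) : IsConicalJunta D f := by
  set a : Fin n → ℝ := fun i => fCoeff f {i}
  have hformula : ∀ x, fCoeff f ∅ + ∑ i, a i * sgn (x i) = f x :=
    fCoeff_empty_add_sum_fCoeff_singleton_mul_sgn (hdeg.trans hD)
  -- the minimum of `f` is attained where every `a i * sgn (x i)` equals `-|a i|`
  set xmin : Fin n → Bool := fun i => decide (0 < a i)
  have hmin : ∀ i, a i * sgn (xmin i) = -|a i| := fun i => by
    by_cases h : 0 < a i
    · simp [xmin, h, sgn, abs_of_pos h]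
    · simp [xmin, h, sgn, abs_of_nonpos (not_lt.mp h)]
  let g : Option (Fin n) → (Fin n → Bool) → ℝ :=
    fun o => o.elim (fun _ => f xmin) fun i x => |a i| + a i * sgn (x i)
  convert isConicalJunta_sum (fun _ => 1) g (fun _ => zero_le_one) ?_ ?_ using 1
  · ext x
    simp only [g, one_mul, Fintype.sum_option, Option.elim, sum_add_distrib]
    rw [← hformula x, ← hformula xmin]
    simp_rw [hmin, sum_neg_distrib]
    ring
  · rintro (_ | i) x
    · exact hf xmin
    · change 0 ≤ |a i| + a i * sgn (x i)
      cases x i <;> simp [sgn] <;> linarith [neg_abs_le (a i), le_abs_self (a i)]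
  · rintro (_ | i)
    · exact isJunta_const _
    · by_cases hai : a i = 0
      · simpa [g, hai] using isJunta_const (n := n) (D := D) 0
      · refine ⟨{i}, ?_, fun x y hxy => by simp [g, hxy i (mem_singleton_self i)]⟩
        by_contra! hlt
        exact hai (fdeg_le_iff.mp hdeg {i} hlt)

end DegreeOne

/-- Farkas' lemma, by eliminating one generator at a time. -/
theorem exists_dotProduct_nonneg_and_neg {R α ι : Type*} [Field R] [LinearOrder R]
    [IsStrictOrderedRing R] [Fintype α] (s : Finset ι) (v : ι → α → R) (b : α → R)
    (hb : ¬∃ c : ι → R, (∀ i ∈ s, 0 ≤ c i) ∧ ∑ i ∈ s, c i • v i = b) :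
    ∃ y : α → R, (∀ i ∈ s, 0 ≤ y ⬝ᵥ v i) ∧ y ⬝ᵥ b < 0 := by
  classical
  induction s using Finset.induction_on generalizing v b with
  | empty =>
    have hb0 : b ≠ 0 := fun h => hb ⟨0, by simp, by simp [h]⟩
    refine ⟨-b, by simp, ?_⟩
    have hpos : 0 < b ⬝ᵥ b := lt_of_le_of_ne (sum_nonneg fun i _ => mul_self_nonneg (b i))
      (Ne.symm (dotProduct_self_eq_zero.not.mpr hb0))
    simpa using hpos
  | insert a s ha ih =>
    have hb' : ∀ (t : R) (c : ι → R), 0 ≤ t → (∀ i ∈ s, 0 ≤ c i) →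
        t • v a + ∑ i ∈ s, c i • v i ≠ b := by
      intro t c ht hc hcb
      refine hb ⟨Function.update c a t, fun i hi => ?_, ?_⟩
      · rcases mem_insert.mp hi with rfl | hi
        · simpa using ht
        · simpa [Function.update_of_ne (ne_of_mem_of_not_mem hi ha)] using hc i hi
      · rw [sum_insert ha, Function.update_self, ← hcb]
        congr 1
        exact sum_congr rfl fun i hi => by rw [Function.update_of_ne (ne_of_mem_of_not_mem hi ha)]
    obtain ⟨y, hy, hyb⟩ := ih v b fun ⟨c, hc, hcb⟩ => hb' 0 c le_rfl hc (by simpa using hcb)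
    rcases le_or_gt 0 (y ⬝ᵥ v a) with h0 | h0
    · exact ⟨y, forall_mem_insert _ _ _ |>.mpr ⟨h0, hy⟩, hyb⟩
    set d := y ⬝ᵥ v a
    -- project along `v a` onto the hyperplane `y ⬝ᵥ u = 0`, where the induction hypothesis applies
    let P : (α → R) → α → R := fun u => u - (y ⬝ᵥ u / d) • v a
    obtain ⟨y', hy', hy'b⟩ := ih (P ∘ v) (P b) <| by
      rintro ⟨c, hc, hcb⟩
      have hsum : 0 ≤ ∑ i ∈ s, c i * (y ⬝ᵥ v i) :=
        sum_nonneg fun i hi => mul_nonneg (hc i hi) (hy i hi)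
      refine hb' ((y ⬝ᵥ b - ∑ i ∈ s, c i * (y ⬝ᵥ v i)) / d) c
        (div_nonneg_of_nonpos (by linarith) h0.le) hc ?_
      simp only [P, Function.comp_apply, smul_sub, sum_sub_distrib, smul_smul] at hcb
      rw [← sum_smul] at hcb
      rw [sub_div, sum_div, sub_smul]
      simp_rw [mul_div_assoc]
      linear_combination (norm := module) hcb
    let z := y' - (y' ⬝ᵥ v a / d) • y
    have hz : ∀ u, z ⬝ᵥ u = y' ⬝ᵥ P u := fun u => by
      simp only [z, P, sub_dotProduct, dotProduct_sub, smul_dotProduct, dotProduct_smul,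
        smul_eq_mul]
      ring
    refine ⟨z, forall_mem_insert _ _ _ |>.mpr ⟨?_, fun i hi => (hz _).symm ▸ hy' i hi⟩, hz b ▸ hy'b⟩
    simp [hz, P, d, h0.ne]

section Subcube

variable {n D : ℕ}

def subcubeInd (T : Finset (Fin n)) (a x : Fin n → Bool) : ℝ :=
  if ∀ i ∈ T, x i = a i then 1 else 0

lemma subcubeInd_nonneg (T : Finset (Fin n)) (a x : Fin n → Bool) : 0 ≤ subcubeInd T a x := by
  unfold subcubeInd; split_ifs <;> norm_num

lemma isJunta_subcubeInd {T : Finset (Fin n)} (hT : T.card ≤ D) (a : Fin n → Bool) :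
    IsJunta D (subcubeInd T a) :=
  ⟨T, hT, fun x y hxy => by
    have : (∀ i ∈ T, x i = a i) ↔ ∀ i ∈ T, y i = a i := forall₂_congr fun i hi => by rw [hxy i hi]
    simp only [subcubeInd, this]⟩

/-- Each pattern on `T` is counted once, through the `a` that vanishes off `T`. -/
lemma sum_filter_mul_subcubeInd {T : Finset (Fin n)} {g : (Fin n → Bool) → ℝ}
    (hg : ∀ x y, (∀ i ∈ T, x i = y i) → g x = g y) (x : Fin n → Bool) :
    ∑ a ∈ univ.filter (fun a : Fin n → Bool => ∀ i ∉ T, a i = false), g a * subcubeInd T a x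
      = g x := by
  classical
  let a₀ : Fin n → Bool := fun i => if i ∈ T then x i else false
  have hagree : ∀ i ∈ T, x i = a₀ i := fun i hi => by simp [a₀, hi]
  rw [sum_eq_single_of_mem a₀ (by simp +contextual [a₀])]
  · rw [subcubeInd, if_pos hagree, mul_one, hg a₀ x fun i hi => (hagree i hi).symm]
  · intro a ha hne
    refine mul_eq_zero_of_right _ (if_neg fun hxa => hne (funext fun i => ?_))
    by_cases hi : i ∈ T
    · simp [a₀, hi, hxa i hi]
    · simp [a₀, hi, (mem_filter.mp ha).2 i hi]

lemma uexp_mul_sum_mul {ι : Type*} (Y : (Fin n → Bool) → ℝ) (s : Finset ι) (c : ι → ℝ)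
    (g : ι → (Fin n → Bool) → ℝ) :
    uexp (fun x => Y x * ∑ k ∈ s, c k * g k x) = ∑ k ∈ s, c k * uexp (fun x => Y x * g k x) := by
  simp_rw [mul_sum, uexp_sum, ← uexp_const_mul]
  exact sum_congr rfl fun k _ => congrArg uexp (funext fun x => by ring)

lemma uexp_mul_nonneg_of_isConicalJunta {Y h : (Fin n → Bool) → ℝ}
    (hY : ∀ T a, T.card ≤ D → 0 ≤ uexp (fun x => Y x * subcubeInd T a x))
    (hh : IsConicalJunta D h) : 0 ≤ uexp (fun x => Y x * h x) := by
  obtain ⟨N, c, g, hc, hg, hj, hsum⟩ := hh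
  simp_rw [hsum, uexp_mul_sum_mul]
  refine sum_nonneg fun k _ => mul_nonneg (hc k) ?_
  obtain ⟨T, hT, hgT⟩ := hj k
  conv_rhs => enter [1, x, 2]; rw [← sum_filter_mul_subcubeInd hgT x]
  rw [uexp_mul_sum_mul]
  exact sum_nonneg fun a _ => mul_nonneg (hg k a) (hY T a hT)

end Subcube

section Counting

lemma card_filter_card_le_eq_sum_choose (n D : ℕ) :
    #(univ.filter fun S : Finset (Fin n) => S.card ≤ D) = ∑ k ∈ range (D + 1), n.choose k := by
  rw [card_eq_sum_card_fiberwise (f := card) (t := range (D + 1))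
    fun S hS => mem_range.mpr (Nat.lt_succ_of_le (mem_filter.mp hS).2)]
  refine sum_congr rfl fun k hk => ?_
  have hkD : k ≤ D := Nat.lt_succ_iff.mp (mem_range.mp hk)
  have hfiber : (univ.filter fun S : Finset (Fin n) => S.card ≤ D ∧ S.card = k)
      = powersetCard k univ := by
    ext S
    simp only [mem_filter, mem_univ, true_and, mem_powersetCard, subset_univ]
    exact ⟨And.right, fun h => ⟨h ▸ hkD, h⟩⟩
  rw [filter_filter, hfiber, card_powersetCard, card_univ, Fintype.card_fin]

lemma sum_range_choose_le_pow {n D : ℕ} (hn : 2 ≤ n) (hD : 2 ≤ D) :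
    ∑ k ∈ range (D + 1), n.choose k ≤ n ^ D := by
  induction D, hD using Nat.le_induction with
  | base =>
    obtain ⟨m, rfl⟩ := Nat.exists_eq_add_of_le hn
    have h2 := Nat.descFactorial_eq_factorial_mul_choose (2 + m) 2
    simp [Nat.descFactorial, sum_range_succ] at h2 ⊢
    nlinarith
  | succ D hD ih =>
    have hfac : 2 ≤ (D + 1).factorial := by
      simpa using Nat.factorial_le (show 2 ≤ D + 1 by omega)
    have hchoose : 2 * n.choose (D + 1) ≤ n ^ (D + 1) :=
      calc 2 * n.choose (D + 1) ≤ (D + 1).factorial * n.choose (D + 1) :=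
            Nat.mul_le_mul_right _ hfac
        _ = n.descFactorial (D + 1) := (Nat.descFactorial_eq_factorial_mul_choose _ _).symm
        _ ≤ n ^ (D + 1) := Nat.descFactorial_le_pow _ _
    have hpow : 2 * n ^ D ≤ n ^ (D + 1) := by
      rw [pow_succ, mul_comm 2]
      exact Nat.mul_le_mul_left _ hn
    rw [sum_range_succ]
    omega

lemma card_filter_card_le_le_pow {n D : ℕ} (hn : 2 ≤ n) (hD : 2 ≤ D) :
    #(univ.filter fun S : Finset (Fin n) => S.card ≤ D) ≤ n ^ D :=
  (card_filter_card_le_eq_sum_choose n D).trans_le (sum_range_choose_le_pow hn hD)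

end Counting

section Separator

variable {n D : ℕ}

lemma exists_separator_of_not_isConicalJunta {g : (Fin n → Bool) → ℝ}
    (hg : ¬IsConicalJunta D g) :
    ∃ Y : (Fin n → Bool) → ℝ, (∀ h, IsConicalJunta D h → 0 ≤ uexp (fun x => Y x * h x)) ∧
      uexp (fun x => Y x * g x) < 0 := by
  let v : {p : Finset (Fin n) × (Fin n → Bool) // p.1.card ≤ D} → (Fin n → Bool) → ℝ :=
    fun p => subcubeInd p.1.1 p.1.2
  obtain ⟨Y, hY, hYg⟩ := exists_dotProduct_nonneg_and_neg univ v g <| by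
    rintro ⟨c, hc, hcg⟩
    refine hg ?_
    convert isConicalJunta_sum c v (fun p => hc p (mem_univ p))
      (fun p => subcubeInd_nonneg _ _) (fun p => isJunta_subcubeInd p.2 _) using 1
    ext x
    simp [← hcg]
  refine ⟨Y, fun h => uexp_mul_nonneg_of_isConicalJunta fun T a hT => ?_, ?_⟩
  · rw [uexp_mul_eq_dotProduct_div]
    exact div_nonneg (hY ⟨(T, a), hT⟩ (mem_univ _)) (Nat.cast_nonneg _)
  · rw [uexp_mul_eq_dotProduct_div]
    exact div_neg_of_neg_of_pos hYg (by simp)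

lemma exists_normalizing_coeffs {E A F η : ℝ} (hE : 0 ≤ E) (hF : 0 ≤ F) (hη : 0 ≤ η)
    (h : A + η * E < 0) :
    ∃ α β : ℝ, 0 ≤ α ∧ 0 ≤ β ∧ α * E + β = 1 ∧ α * A + β * F < -η := by
  rcases hE.eq_or_lt with rfl | hE
  · have hA : A < 0 := by linarith
    refine ⟨(F + η + 1) / -A, 1, div_nonneg (by linarith) (by linarith), zero_le_one,
      by ring, ?_⟩
    rw [div_mul_eq_mul_div, div_neg, mul_div_assoc, div_self hA.ne]
    linarith
  · refine ⟨E⁻¹, 0, inv_nonneg.mpr hE.le, le_rfl, by field_simp; ring, ?_⟩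
    rw [zero_mul, add_zero, inv_mul_eq_div, div_lt_iff₀ hE]
    linarith

lemma exists_normalized_separator {Y f : (Fin n → Bool) → ℝ} {η : ℝ} (hf : ∀ x, 0 ≤ f x)
    (hη : 0 ≤ η) (hY : ∀ h, IsConicalJunta D h → 0 ≤ uexp (fun x => Y x * h x))
    (hYf : uexp (fun x => Y x * (f x + η)) < 0) :
    ∃ L : (Fin n → Bool) → ℝ, (∀ h, IsConicalJunta D h → 0 ≤ uexp (fun x => L x * h x)) ∧
      uexp L = 1 ∧ uexp (fun x => L x * f x) < -η := by
  have hE : 0 ≤ uexp Y := by simpa using hY _ isConicalJunta_one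
  have hsplit : uexp (fun x => Y x * (f x + η)) = uexp (fun x => Y x * f x) + η * uexp Y := by
    simp_rw [mul_add, mul_comm (Y _) η, uexp_add, uexp_const_mul]
  obtain ⟨α, β, hα, hβ, h1, h2⟩ :=
    exists_normalizing_coeffs hE (uexp_nonneg hf) hη (hsplit ▸ hYf)
  have hL : ∀ h : (Fin n → Bool) → ℝ, uexp (fun x => (α * Y x + β) * h x)
      = α * uexp (fun x => Y x * h x) + β * uexp h := fun h => by
    simp_rw [add_mul, mul_assoc, uexp_add, uexp_const_mul]
  refine ⟨fun x => α * Y x + β, fun h hh => ?_, ?_, by rwa [hL]⟩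
  · rw [hL]
    exact add_nonneg (mul_nonneg hα (hY h hh)) (mul_nonneg hβ (uexp_nonneg hh.nonneg))
  · simpa [uexp_add, uexp_const_mul, uexp_const] using h1

end Separator

section LowDegreePart

variable {n D : ℕ}

def lowDegreePart (D : ℕ) (f : (Fin n → Bool) → ℝ) (x : Fin n → Bool) : ℝ :=
  ∑ S ∈ univ.filter (fun S : Finset (Fin n) => S.card ≤ D), fCoeff f S * chi S x

lemma fCoeff_lowDegreePart (f : (Fin n → Bool) → ℝ) (S : Finset (Fin n)) :
    fCoeff (lowDegreePart D f) S = if S.card ≤ D then fCoeff f S else 0 :=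
  (fCoeff_sum_mul_chi _ _ S).trans (by simp)

lemma fdeg_lowDegreePart_le (f : (Fin n → Bool) → ℝ) : fdeg (lowDegreePart D f) ≤ D :=
  fdeg_le_iff.mpr fun S hS => by rw [fCoeff_lowDegreePart, if_neg hS.not_ge]

lemma uexp_lowDegreePart_mul (f : (Fin n → Bool) → ℝ) {h : (Fin n → Bool) → ℝ}
    (hh : fdeg h ≤ D) :
    uexp (fun x => lowDegreePart D f x * h x) = uexp (fun x => f x * h x) := by
  simp_rw [uexp_mul_eq_sum_fCoeff_mul, fCoeff_lowDegreePart]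
  refine sum_congr rfl fun S _ => ?_
  split_ifs with hS
  · rfl
  · rw [fdeg_le_iff.mp hh S (not_le.mp hS), zero_mul, mul_zero]

end LowDegreePart

section Bounds

variable {n D : ℕ}

lemma abs_fCoeff_le_one {L : (Fin n → Bool) → ℝ} (hL1 : uexp L = 1)
    (hL : ∀ h, IsConicalJunta D h → 0 ≤ uexp (fun x => L x * h x)) {S : Finset (Fin n)}
    (hS : S.card ≤ D) : |fCoeff L S| ≤ 1 := by
  have key : ∀ e : ℝ, |e| = 1 → 0 ≤ 1 + e * fCoeff L S := fun e he => by
    have hj : IsJunta D (fun x => 1 + e * chi S x) :=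
      ⟨S, hS, fun x y hxy => by
        dsimp only
        rw [chi, chi, prod_congr rfl fun i hi => by rw [hxy i hi]]⟩
    have hnonneg : ∀ x, 0 ≤ 1 + e * chi S x := fun x => by
      have := neg_abs_le (e * chi S x)
      rw [abs_mul, he, abs_chi, one_mul] at this
      linarith
    have := hL _ (hj.isConicalJunta hnonneg)
    simp_rw [mul_add, mul_one, mul_left_comm (L _) e, uexp_add, uexp_const_mul, hL1] at this
    exact this
  rw [abs_le]
  constructor <;> linarith [key 1 (by simp), key (-1) (by simp)]

lemma abs_le_card_of_fdeg_le {L : (Fin n → Bool) → ℝ} (hdeg : fdeg L ≤ D)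
    (hL : ∀ S : Finset (Fin n), S.card ≤ D → |fCoeff L S| ≤ 1) (x : Fin n → Bool) :
    |L x| ≤ #(univ.filter fun S : Finset (Fin n) => S.card ≤ D) := by
  rw [← sum_fCoeff_mul_chi L x, card_filter, Nat.cast_sum]
  refine (abs_sum_le_sum_abs _ _).trans (sum_le_sum fun S _ => ?_)
  rw [abs_mul, abs_chi, mul_one]
  split_ifs with hS
  · exact_mod_cast hL S hS
  · simp [fdeg_le_iff.mp hdeg S (not_le.mp hS)]

end Bounds

/-- existence of a well-behaved separating functional when
`deg(f) ≤ D < deg₊(f+η)`. -/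
theorem stmt7 (n : ℕ) (f : (Fin n → Bool) → ℝ) (hf : ∀ x, 0 ≤ f x)
    (η : ℝ) (hη : 0 < η) (D : ℕ)
    (hdeg : fdeg f ≤ D) (hdegp : D < degPlus (fun x => f x + η)) :
    ∃ L : (Fin n → Bool) → ℝ,
      fdeg L ≤ D ∧
      uexp L = 1 ∧
      uexp (fun x => L x * f x) < -η ∧
      (∀ h : (Fin n → Bool) → ℝ, IsConicalJunta D h → 0 ≤ uexp (fun x => L x * h x)) ∧
      (∀ S : Finset (Fin n), S.card ≤ D → |fCoeff L S| ≤ 1) ∧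
      (∀ x, |L x| ≤ (n : ℝ) ^ D) := by
  have hfη : ∀ x, 0 ≤ f x + η := fun x => by linarith [hf x]
  have hnot : ¬IsConicalJunta D (fun x => f x + η) := fun h => (Nat.sInf_le h).not_gt hdegp
  have hD : 2 ≤ D := by
    by_contra! hD
    exact hnot (isConicalJunta_of_fdeg_le_one hfη (fdeg_add_const_le hdeg η) (by omega))
  have hn : D < n := hdegp.trans_le (Nat.sInf_le (isConicalJunta_of_nonneg hfη))
  obtain ⟨Y₀, hY₀pos, hY₀f⟩ := exists_separator_of_not_isConicalJunta hnot
  obtain ⟨Y, hYpos, hY1, hYf⟩ := exists_normalized_separator hf hη.le hY₀pos hY₀f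
  set L := lowDegreePart D Y
  have hLpos : ∀ h, IsConicalJunta D h → 0 ≤ uexp (fun x => L x * h x) := fun h hh => by
    rw [uexp_lowDegreePart_mul Y hh.fdeg_le]
    exact hYpos h hh
  have hL1 : uexp L = 1 := by
    simpa only [mul_one] using
      (uexp_lowDegreePart_mul Y (isConicalJunta_one (D := D)).fdeg_le).trans (by simpa using hY1)
  have hcoeff : ∀ S : Finset (Fin n), S.card ≤ D → |fCoeff L S| ≤ 1 :=
    fun S => abs_fCoeff_le_one hL1 hLpos
  refine ⟨L, fdeg_lowDegreePart_le Y, hL1, by rwa [uexp_lowDegreePart_mul Y hdeg], hLpos,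
    hcoeff, fun x => ?_⟩
  calc |L x| ≤ #(univ.filter fun S : Finset (Fin n) => S.card ≤ D) :=
        abs_le_card_of_fdeg_le (fdeg_lowDegreePart_le Y) hcoeff x
    _ ≤ (n : ℝ) ^ D := by exact_mod_cast card_filter_card_le_le_pow (by omega) hD
end
end

section
/- Let μ be a density on [q]^n with H∞(μ) ≥ (n − t)·log₂ q. Then there exists a partition [q]^n = (⋃_{i∈[N]} S_i) ∪ S_error such that: (i) for each i ∈ [N], the conditional density μ|_{S_i} is a 10t-CBD distribution; and (ii) μ(S_error) ≤ q^{-t}, where μ(S) = Pr_{X~μ}[X ∈ S]. -/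
open scoped BigOperators

noncomputable section

/-!
Greedy peeling. While the remaining set `A` has mass above `q^{-t}`, choose, among all pairs
`(J, β)` with `Pr[X_J = β_J | A] ≥ q^{-0.8|J|}` (the pair `(∅, β)` always qualifies), one with
`|J|` maximal, and split off `S = A ∩ {X_J = β_J}`. Conditioned on `S`, `X_J` is fixed; a heavy
pattern on some `K` disjoint from `J` would make `(J ∪ K, ·)` a qualifying pair with larger `|J|`,
so every projection outside `J` is dense. The min-entropy bound gives `μ ≤ q^t` pointwise, hence
`q^{-t - 0.8|J|} < Pr[S] ≤ q^{t - |J|}`, which forces `|J| ≤ 10t`.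
-/

open Finset Function

theorem Finset.exists_partition_of_forall_exists_subset {α : Type*} [DecidableEq α]
    (Good Small : Finset α → Prop) (h : ∀ A, ¬ Small A → ∃ S ⊆ A, S.Nonempty ∧ Good S)
    (A : Finset α) :
    ∃ (N : ℕ) (S : Fin N → Finset α) (E : Finset α), Pairwise (Disjoint on S) ∧
      (∀ i, Disjoint (S i) E) ∧ univ.biUnion S ∪ E = A ∧ (∀ i, Good (S i)) ∧ Small E := by
  induction A using Finset.strongInduction with
  | H A ih =>
  by_cases hA : Small A
  · exact ⟨0, Fin.elim0, A, fun i => i.elim0, fun i => i.elim0, by simp, fun i => i.elim0, hA⟩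
  obtain ⟨S₀, hS₀A, hS₀, hgood⟩ := h A hA
  obtain ⟨N, S, E, hS, hSE, hcover, hSgood, hE⟩ := ih (A \ S₀) (sdiff_ssubset hS₀A hS₀)
  have hrest : ∀ T ⊆ A \ S₀, Disjoint S₀ T :=
    fun T hT => disjoint_of_subset_right hT disjoint_sdiff
  have hSrest : ∀ i, Disjoint S₀ (S i) :=
    fun i => hrest _ (hcover ▸ subset_union_left.trans' (subset_biUnion_of_mem S (mem_univ i)))
  refine ⟨N + 1, Fin.cons S₀ S, E, ?_, Fin.cases (hrest E (hcover ▸ subset_union_right)) hSE,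
    ?_, Fin.cases hgood hSgood, hE⟩
  · exact pairwise_fin_succ_iff.2 ⟨fun i => (hSrest i).symm, hSrest, fun i j hij => hS hij⟩
  · calc univ.biUnion (Fin.cons S₀ S : Fin (N + 1) → Finset α) ∪ E
        = S₀ ∪ (univ.biUnion S ∪ E) := by
          ext x
          simp [Fin.exists_fin_succ, or_assoc]
      _ = A := by rw [hcover, union_sdiff_of_subset hS₀A]

section MinEntropy

variable {ι : Type*} [Finite ι] {f : ι → ℝ} {H : ℝ}

theorem le_two_rpow_neg_of_le_neg_logb_ciSup (h : H ≤ -Real.logb 2 (⨆ i, f i)) (i : ι) :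
    f i ≤ 2 ^ (-H) := by
  have hfi : f i ≤ ⨆ i, f i := le_ciSup (Finite.bddAbove_range f) i
  rcases le_or_gt (⨆ i, f i) 0 with hsup | hsup
  · exact hfi.trans (hsup.trans (by positivity))
  refine hfi.trans ((Real.logb_le_iff_le_rpow (by norm_num) hsup).1 ?_)
  linarith

theorem le_neg_logb_ciSup_of_le_two_rpow_neg {i₀ : ι} (hpos : 0 < f i₀)
    (h : ∀ i, f i ≤ 2 ^ (-H)) : H ≤ -Real.logb 2 (⨆ i, f i) := by
  have : Nonempty ι := ⟨i₀⟩
  have hsup : 0 < ⨆ i, f i := hpos.trans_le (le_ciSup (Finite.bddAbove_range f) i₀)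
  have := (Real.logb_le_iff_le_rpow (by norm_num) hsup).2 (ciSup_le h)
  linarith

theorem neg_logb_ciSup_eq_zero {i₀ : ι} (h₀ : f i₀ = 1) (h : ∀ i, f i ≤ 1) :
    -Real.logb 2 (⨆ i, f i) = 0 := by
  have : Nonempty ι := ⟨i₀⟩
  rw [le_antisymm (ciSup_le h) (h₀ ▸ le_ciSup (Finite.bddAbove_range f) i₀), Real.logb_one,
    neg_zero]

end MinEntropy

theorem two_rpow_mul_logb {q : ℝ} (hq : 0 < q) (c : ℝ) :
    (2 : ℝ) ^ (c * Real.logb 2 q) = q ^ c := by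
  rw [mul_comm, Real.rpow_mul (by norm_num), Real.rpow_logb (by norm_num) (by norm_num) hq]

section Probability

variable {Ω : Type*} [Fintype Ω] {μ : Ω → ℝ}

theorem prSet_mono (hμ : ∀ x, 0 ≤ μ x) {S T : Finset Ω} (h : S ⊆ T) :
    prSet μ S ≤ prSet μ T :=
  div_le_div_of_nonneg_right (sum_le_sum_of_subset_of_nonneg h fun x _ _ => hμ x)
    (by positivity)

theorem prSet_pos_of_mem (hμ : ∀ x, 0 ≤ μ x) {S : Finset Ω} {x : Ω} (hx : x ∈ S)
    (hμx : 0 < μ x) : 0 < prSet μ S :=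
  div_pos (hμx.trans_le (single_le_sum (fun y _ => hμ y) hx))
    (Nat.cast_pos.2 (Fintype.card_pos_iff.2 ⟨x⟩))

theorem exists_pos_of_prSet_pos {S : Finset Ω} (hS : 0 < prSet μ S) :
    ∃ x ∈ S, 0 < μ x := by
  by_contra! h
  exact hS.not_ge (div_nonpos_of_nonpos_of_nonneg (sum_nonpos h) (Nat.cast_nonneg _))

theorem prSet_le_card_mul_div {c : ℝ} (hμ : ∀ x, μ x ≤ c) (S : Finset Ω) :
    prSet μ S ≤ S.card * c / Fintype.card Ω := by
  unfold prSet
  gcongr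
  simpa using sum_le_sum fun x (_ : x ∈ S) => hμ x

theorem prSet_condDensity [DecidableEq Ω] (S T : Finset Ω) :
    prSet (condDensity μ S) T = prSet μ (S ∩ T) / prSet μ S := by
  have h : ∀ x, condDensity μ S x = (if x ∈ S then μ x else 0) / prSet μ S := fun x => by
    unfold condDensity; split_ifs <;> simp
  rw [prSet, sum_congr rfl fun x _ => h x, ← sum_div, div_right_comm, sum_ite_mem,
    inter_comm]
  rfl

end Probability

section Cube

variable {α : Type*} [Fintype α] {n : ℕ}

-- Classical, as in `prMarg`, so that `prMarg u I y` is definitionally `prSet u (cylinder I y)`.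
open Classical in
def cylinder (J : Finset (Fin n)) (β : Fin n → α) : Finset (Fin n → α) :=
  univ.filter fun x => ∀ i ∈ J, x i = β i

theorem mem_cylinder {J : Finset (Fin n)} {β x : Fin n → α} :
    x ∈ cylinder J β ↔ ∀ i ∈ J, x i = β i := by
  simp [cylinder]

@[simp]
theorem cylinder_empty (β : Fin n → α) : cylinder ∅ β = univ := by
  ext; simp [mem_cylinder]

theorem card_cylinder (J : Finset (Fin n)) (β : Fin n → α) :
    (cylinder J β).card = Fintype.card α ^ (n - J.card) := by
  classical
  have : cylinder J β = Fintype.piFinset fun i => if i ∈ J then {β i} else univ := by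
    ext x
    simp only [mem_cylinder, Fintype.mem_piFinset]
    refine forall_congr' fun i => ?_
    split_ifs <;> simp [*]
  simp [this, apply_ite card, prod_ite, filter_not, card_univ_sdiff]

theorem cylinder_inter_cylinder [DecidableEq α] {J K : Finset (Fin n)} (h : Disjoint J K)
    (β γ : Fin n → α) : cylinder J β ∩ cylinder K γ = cylinder (J ∪ K) (K.piecewise γ β) := by
  ext x
  simp only [mem_inter, mem_cylinder, mem_union, or_imp, forall_and]
  refine and_congr (forall₂_congr fun i hi => ?_) (forall₂_congr fun i hi => ?_)
  · rw [piecewise_eq_of_notMem _ _ _ (disjoint_left.1 h hi)]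
  · rw [piecewise_eq_of_mem _ _ _ hi]

variable {μ : (Fin n → α) → ℝ} {t : ℝ}

theorem le_rpow_of_le_minEntropy [Nonempty α]
    (h : ((n : ℝ) - t) * Real.logb 2 (Fintype.card α) ≤ minEntropy μ) (x : Fin n → α) :
    μ x ≤ (Fintype.card α : ℝ) ^ t := by
  have hq : (0 : ℝ) < Fintype.card α := Nat.cast_pos.2 Fintype.card_pos
  have hx := le_two_rpow_neg_of_le_neg_logb_ciSup h x
  rw [← neg_mul, two_rpow_mul_logb hq, neg_sub, Real.rpow_sub hq, Real.rpow_natCast] at hx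
  simp only [Fintype.card_fun, Fintype.card_fin, Nat.cast_pow] at hx
  exact (div_le_div_iff_of_pos_right (by positivity)).1 hx

theorem prSet_cylinder_le [Nonempty α] (hμ : ∀ x, μ x ≤ (Fintype.card α : ℝ) ^ t)
    (J : Finset (Fin n)) (β : Fin n → α) :
    prSet μ (cylinder J β) ≤ (Fintype.card α : ℝ) ^ (t - J.card) := by
  set q : ℝ := (Fintype.card α : ℝ)
  have hq : 0 < q := Nat.cast_pos.2 Fintype.card_pos
  have hJ : J.card ≤ n := by simpa using card_le_univ J
  calc prSet μ (cylinder J β) ≤ q ^ (n - J.card) * q ^ t / q ^ n := by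
        simpa [card_cylinder] using prSet_le_card_mul_div hμ (cylinder J β)
    _ = q ^ t / q ^ J.card := by
        rw [div_eq_div_iff (by positivity) (by positivity), mul_right_comm, ← pow_add,
          Nat.sub_add_cancel hJ, mul_comm]
    _ = q ^ (t - J.card) := by rw [Real.rpow_sub hq, Real.rpow_natCast]

theorem isCBDWith_condDensity [Nonempty α] [DecidableEq α] (hμ : ∀ x, 0 ≤ μ x)
    {S : Finset (Fin n → α)} (hS : 0 < prSet μ S) {d : ℝ} {J : Finset (Fin n)} {β : Fin n → α}
    (hJ : (J.card : ℝ) ≤ d) (hSJ : S ⊆ cylinder J β)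
    (hdense : ∀ K, Disjoint K J → ∀ γ, prSet μ (S ∩ cylinder K γ) ≤
      prSet μ S * (Fintype.card α : ℝ) ^ (-(0.8 * (K.card : ℝ)))) :
    IsCBDWith d J (condDensity μ S) := by
  obtain ⟨x₀, hx₀S, hx₀⟩ := exists_pos_of_prSet_pos hS
  have hq : (0 : ℝ) < Fintype.card α := Nat.cast_pos.2 Fintype.card_pos
  have hmarg : ∀ K γ,
      prMarg (condDensity μ S) K γ = prSet μ (S ∩ cylinder K γ) / prSet μ S :=
    fun K γ => prSet_condDensity S _
  refine ⟨hJ, neg_logb_ciSup_eq_zero (i₀ := β) ?_ fun γ => ?_, fun K hK => ?_⟩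
  · rw [hmarg, inter_eq_left.2 hSJ, div_self hS.ne']
  · rw [hmarg, div_le_one hS]
    exact prSet_mono hμ inter_subset_left
  · refine le_neg_logb_ciSup_of_le_two_rpow_neg (i₀ := x₀) ?_ fun γ => ?_
    · rw [hmarg]
      have hx₀K : x₀ ∈ S ∩ cylinder K x₀ := mem_inter.2 ⟨hx₀S, mem_cylinder.2 fun _ _ => rfl⟩
      exact div_pos (prSet_pos_of_mem hμ hx₀K hx₀) hS
    · rw [hmarg, ← neg_mul, two_rpow_mul_logb hq, div_le_iff₀ hS, mul_comm]
      exact hdense K hK γ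

section Heavy

variable [DecidableEq α]

def IsHeavy (μ : (Fin n → α) → ℝ) (A : Finset (Fin n → α)) (J : Finset (Fin n))
    (β : Fin n → α) : Prop :=
  prSet μ A * (Fintype.card α : ℝ) ^ (-(0.8 * (J.card : ℝ))) ≤ prSet μ (A ∩ cylinder J β)

theorem isHeavy_empty (A : Finset (Fin n → α)) (β : Fin n → α) : IsHeavy μ A ∅ β := by
  simp [IsHeavy]

theorem prSet_inter_cylinder_le_of_maximal [Nonempty α] {A : Finset (Fin n → α)}
    {J : Finset (Fin n)} {β : Fin n → α} (hJ : IsHeavy μ A J β)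
    (hmax : ∀ J' β', IsHeavy μ A J' β' → J'.card ≤ J.card) (K : Finset (Fin n))
    (hK : Disjoint K J) (γ : Fin n → α) :
    prSet μ (A ∩ cylinder J β ∩ cylinder K γ) ≤
      prSet μ (A ∩ cylinder J β) * (Fintype.card α : ℝ) ^ (-(0.8 * (K.card : ℝ))) := by
  have hq : (0 : ℝ) < Fintype.card α := Nat.cast_pos.2 Fintype.card_pos
  rcases K.eq_empty_or_nonempty with rfl | hKne
  · simp
  by_contra! hlt
  have hheavy : IsHeavy μ A (J ∪ K) (K.piecewise γ β) := by
    rw [IsHeavy, ← cylinder_inter_cylinder hK.symm, ← inter_assoc,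
      card_union_of_disjoint hK.symm, Nat.cast_add, mul_add, neg_add, Real.rpow_add hq,
      ← mul_assoc]
    exact (mul_le_mul_of_nonneg_right hJ (by positivity)).trans hlt.le
  have hcard := hmax _ _ hheavy
  rw [card_union_of_disjoint hK.symm] at hcard
  have := hKne.card_pos
  omega

theorem exists_subset_isCBD_condDensity [Nonempty α] (hμ₀ : ∀ x, 0 ≤ μ x)
    (hμ : ∀ x, μ x ≤ (Fintype.card α : ℝ) ^ t) {A : Finset (Fin n → α)}
    (hA : (Fintype.card α : ℝ) ^ (-t) < prSet μ A) :
    ∃ S ⊆ A, S.Nonempty ∧ 0 < prSet μ S ∧ IsCBD (10 * t) (condDensity μ S) := by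
  classical
  set q : ℝ := (Fintype.card α : ℝ)
  have hq : 1 ≤ q := Nat.one_le_cast.2 Fintype.card_pos
  obtain ⟨β₀⟩ : Nonempty (Fin n → α) := inferInstance
  obtain ⟨⟨J, β⟩, hJβ, hmax⟩ := exists_max_image
    (univ.filter fun p : Finset (Fin n) × (Fin n → α) => IsHeavy μ A p.1 p.2) (·.1.card)
    ⟨(∅, β₀), by simpa using isHeavy_empty A β₀⟩
  simp only [mem_filter, mem_univ, true_and, Prod.forall] at hJβ hmax
  have hlow : q ^ (-t) * q ^ (-(0.8 * (J.card : ℝ))) < prSet μ (A ∩ cylinder J β) :=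
    (mul_lt_mul_of_pos_right hA (by positivity)).trans_le hJβ
  have hS : 0 < prSet μ (A ∩ cylinder J β) := lt_of_le_of_lt (by positivity) hlow
  obtain ⟨x, hx, -⟩ := exists_pos_of_prSet_pos hS
  refine ⟨A ∩ cylinder J β, inter_subset_left, ⟨x, hx⟩, hS, J,
    isCBDWith_condDensity hμ₀ hS ?_ inter_subset_right
      (prSet_inter_cylinder_le_of_maximal hJβ hmax)⟩
  have hup : prSet μ (A ∩ cylinder J β) ≤ q ^ (t - J.card) :=
    (prSet_mono hμ₀ inter_subset_right).trans (prSet_cylinder_le hμ J β)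
  rw [← Real.rpow_add (by positivity)] at hlow
  have : -t + -(0.8 * (J.card : ℝ)) < t - J.card :=
    lt_of_not_ge fun h => (Real.rpow_le_rpow_of_exponent_le hq h).not_gt (hlow.trans_le hup)
  linarith

end Heavy

end Cube

/-- one-dimensional decomposition of a high min-entropy density
into conditionals that are `10t`-CBD, plus a small error set. -/
theorem stmt13 (n q : ℕ) (hn : 1 ≤ n)
    (μ : (Fin n → Fin q) → ℝ) (hμ : IsDensity μ)
    (t : ℝ) (hent : ((n : ℝ) - t) * Real.logb 2 (q : ℝ) ≤ minEntropy μ) :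
    ∃ (N : ℕ) (S : Fin N → Finset (Fin n → Fin q)) (Serr : Finset (Fin n → Fin q)),
      (∀ i j, i ≠ j → Disjoint (S i) (S j)) ∧
      (∀ i, Disjoint (S i) Serr) ∧
      ((Finset.univ.biUnion S) ∪ Serr = Finset.univ) ∧
      (∀ i, 0 < prSet μ (S i) ∧ IsCBD (10 * t) (condDensity μ (S i))) ∧
      prSet μ Serr ≤ (q : ℝ) ^ (-t) := by
  refine Finset.exists_partition_of_forall_exists_subset
    (fun S => 0 < prSet μ S ∧ IsCBD (10 * t) (condDensity μ S))
    (fun E => prSet μ E ≤ (q : ℝ) ^ (-t)) (fun A hA => ?_) univ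
  obtain ⟨x, -⟩ : A.Nonempty := nonempty_iff_ne_empty.2 fun hA₀ =>
    hA (by simp [hA₀, prSet, Real.rpow_nonneg])
  have : Nonempty (Fin q) := ⟨x ⟨0, hn⟩⟩
  have hbound := le_rpow_of_le_minEntropy (α := Fin q) (by simpa using hent)
  simpa using exists_subset_isCBD_condDensity hμ.1 hbound (by simpa using not_le.1 hA)
end
end

section
/- Let a₁, …, a_N ∈ (0,1) be real numbers with ∑_{i=1}^N a_i = 1 and a_{N−1} + a_N ≥ ε for some ε ∈ (0,1). Then ∑_{j=1}^N a_j / (∑_{i≥j} a_i) ≤ ⌈log₂(1/ε)⌉ + 2. -/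
open scoped BigOperators

noncomputable section

/-! With tail sums `T j = ∑_{i ≥ j} a i`, each ratio `a j / T j = 1 - T (j+1) / T j` is at
most `log₂ (T j / T (j+1))`, because `1 - 1/x ≤ log x ≤ log₂ x` for `x ≥ 1`. So the ratios for
`j ≤ N - 2` telescope to at most `log₂ (T 1 / T (N-1)) = log₂ (1 / (a (N-1) + a N))`, which is at
most `log₂ (1/ε)`, and the last two ratios are at most `1` each. -/

open Finset Real

lemma sub_div_le_logb_two_sub_logb_two {s t : ℝ} (ht : 0 < t) (hts : t ≤ s) :
    (s - t) / s ≤ logb 2 s - logb 2 t := by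
  have hs : 0 < s := ht.trans_le hts
  have hlog : 0 ≤ log (s / t) := log_nonneg ((one_le_div ht).2 hts)
  have hlog2 : log 2 ≤ 1 := by linarith [log_le_sub_one_of_pos (zero_lt_two' ℝ)]
  calc (s - t) / s = 1 - (s / t)⁻¹ := by field_simp
    _ ≤ log (s / t) := one_sub_inv_le_log_of_pos (div_pos hs ht)
    _ ≤ log (s / t) / log 2 :=
      (le_div_iff₀ (log_pos one_lt_two)).2 (mul_le_of_le_one_right hlog hlog2)
    _ = logb 2 s - logb 2 t := logb_div hs.ne' ht.ne'

def tailSum (a : ℕ → ℝ) (N j : ℕ) : ℝ := ∑ i ∈ Icc j N, a i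

section TailSum

variable {a : ℕ → ℝ} {N : ℕ}

lemma tailSum_eq_add {j : ℕ} (hj : j ≤ N) : tailSum a N j = a j + tailSum a N (j + 1) := by
  rw [tailSum, tailSum, Icc_eq_cons_Ioc hj, sum_cons, Icc_add_one_left_eq_Ioc]

lemma tailSum_self : tailSum a N N = a N := by
  simp [tailSum]

lemma tailSum_pos {m j : ℕ} (ha : ∀ i ∈ Icc m N, 0 < a i) (hmj : m ≤ j)
    (hj : j ≤ N) : 0 < tailSum a N j :=
  sum_pos (fun i hi => ha i (Icc_subset_Icc_left hmj hi)) (nonempty_Icc.2 hj)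

lemma div_tailSum_le_one {m j : ℕ} (ha : ∀ i ∈ Icc m N, 0 < a i) (hmj : m ≤ j)
    (hj : j ≤ N) : a j / tailSum a N j ≤ 1 :=
  div_le_one_of_le₀
    (single_le_sum (fun i hi => (ha i (Icc_subset_Icc_left hmj hi)).le) (left_mem_Icc.2 hj))
    (tailSum_pos ha hmj hj).le

lemma sum_Ico_div_tailSum_le_logb_two {m k : ℕ} (ha : ∀ i ∈ Icc m N, 0 < a i) (hmk : m ≤ k)
    (hk : k ≤ N) :
    ∑ j ∈ Ico m k, a j / tailSum a N j ≤ logb 2 (tailSum a N m) - logb 2 (tailSum a N k) := by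
  induction k, hmk using Nat.le_induction with
  | base => simp
  | succ k hmk ih =>
    have hstep :
        a k / tailSum a N k ≤ logb 2 (tailSum a N k) - logb 2 (tailSum a N (k + 1)) := by
      have hT := tailSum_eq_add (a := a) (by omega : k ≤ N)
      have := sub_div_le_logb_two_sub_logb_two (tailSum_pos ha (by omega) hk)
        (by linarith [ha k (mem_Icc.2 ⟨hmk, by omega⟩)] : tailSum a N (k + 1) ≤ tailSum a N k)
      rwa [hT, add_sub_cancel_right, ← hT] at this
    rw [sum_Ico_succ_top hmk]
    linarith [ih (by omega)]

end TailSum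

theorem stmt15_general (N : ℕ) (hN : 2 ≤ N) (a : ℕ → ℝ) (ε : ℝ) (hε0 : 0 < ε)
    (ha : ∀ i ∈ Finset.Icc 1 N, 0 < a i ∧ a i < 1)
    (hsum : (∑ i ∈ Finset.Icc 1 N, a i) = 1)
    (htail : ε ≤ a (N - 1) + a N) :
    (∑ j ∈ Finset.Icc 1 N, a j / (∑ i ∈ Finset.Icc j N, a i))
      ≤ (⌈Real.logb 2 (1 / ε)⌉ : ℝ) + 2 := by
  obtain ⟨n, rfl⟩ : ∃ n, N = n + 2 := ⟨N - 2, by omega⟩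
  have hpos : ∀ i ∈ Icc 1 (n + 2), 0 < a i := fun i hi => (ha i hi).1
  have hT1 : tailSum a (n + 2) 1 = 1 := hsum
  have hTε : ε ≤ tailSum a (n + 2) (n + 1) := by
    rwa [tailSum_eq_add (by omega), tailSum_self]
  have hhead := sum_Ico_div_tailSum_le_logb_two hpos (by omega : 1 ≤ n + 1) (by omega)
  have hlog : logb 2 ε ≤ logb 2 (tailSum a (n + 2) (n + 1)) :=
    logb_le_logb_of_le one_lt_two hε0 hTε
  change ∑ j ∈ Icc 1 (n + 2), a j / tailSum a (n + 2) j ≤ _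
  rw [← Ico_add_one_right_eq_Icc, sum_Ico_succ_top (by omega), sum_Ico_succ_top (by omega)]
  rw [hT1, logb_one] at hhead
  rw [one_div, logb_inv]
  linarith [div_tailSum_le_one hpos (by omega : 1 ≤ n + 1) (by omega),
    div_tailSum_le_one hpos (by omega : 1 ≤ n + 2) le_rfl, Int.le_ceil (-logb 2 ε)]

/-- the elementary estimate on sums of ratios to tail sums. -/
theorem stmt15 (N : ℕ) (hN : 2 ≤ N) (a : ℕ → ℝ) (ε : ℝ) (hε0 : 0 < ε) (hε1 : ε < 1)
    (ha : ∀ i ∈ Finset.Icc 1 N, 0 < a i ∧ a i < 1)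
    (hsum : (∑ i ∈ Finset.Icc 1 N, a i) = 1)
    (htail : ε ≤ a (N - 1) + a N) :
    (∑ j ∈ Finset.Icc 1 N, a j / (∑ i ∈ Finset.Icc j N, a i))
      ≤ (⌈Real.logb 2 (1 / ε)⌉ : ℝ) + 2 :=
  stmt15_general N hN a ε hε0 ha hsum htail
end
end
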